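/- arXiv:2403.09031 — 2 statements merged into one kernel-verified Lean document; each statement's English description precedes it below -/
import Mathlib

section
/- First-order optimality condition for the alignment distance. Let Z, Z⋆ ∈ ℂ^{n_s×r}, and suppose P ∈ ℂ^{r×r} is invertible and minimizes g(P′) := ‖Z − Z⋆P′‖_F² + ‖Z − Z⋆(P′)^{−T}‖_F² over all invertible P′ ∈ ℂ^{r×r} (i.e. g(P) ≤ g(P′) for every invertible P′). Then (Z⋆P)ᴴ·(Z − Z⋆P) = (Z − Z⋆P^{−T})ᵀ·conj(Z⋆P^{−T}). -/
open Matrix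
open scoped BigOperators

noncomputable section

/-- Frobenius norm of a complex matrix. -/
def frobNorm {m n : ℕ} (A : Matrix (Fin m) (Fin n) ℂ) : ℝ :=
  Real.sqrt (∑ i, ∑ j, ‖A i j‖ ^ 2)

/-- Entrywise complex conjugate of a matrix. -/
def conjM {m n : ℕ} (A : Matrix (Fin m) (Fin n) ℂ) : Matrix (Fin m) (Fin n) ℂ :=
  A.map (starRingEnd ℂ)

/-!
Perturb the minimizer along the line `s ↦ P + s • E`. Since the inverse has derivative
`-P⁻¹ E P⁻¹`, the vanishing of the derivative of the cost at `s = 0` says that the real parts of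
two `ℂ`-linear functionals of `E` agree; replacing `E` by `I • E` shows that the functionals
themselves agree. For `E = P F` both are of the form `F ↦ trace (G F)`, so the two matrices `G`
coincide, and their conjugate transposes are the two sides of the claim.
-/

theorem frobNorm_sq_eq_sum {m n : ℕ} (A : Matrix (Fin m) (Fin n) ℂ) :
    frobNorm A ^ 2 = ∑ i, ∑ j, ‖A i j‖ ^ 2 :=
  Real.sq_sqrt (by positivity)

theorem transpose_conjTranspose_eq_conjM {m n : ℕ} (A : Matrix (Fin m) (Fin n) ℂ) :
    Aᵀᴴ = conjM A :=
  rfl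

section Algebra

variable {𝕜 : Type*} [RCLike 𝕜] {m n : Type*} [Fintype m] [Fintype n]

theorem Matrix.ext_of_re_trace_mul {A B : Matrix m n 𝕜}
    (h : ∀ F : Matrix n m 𝕜, RCLike.re (A * F).trace = RCLike.re (B * F).trace) : A = B := by
  refine ext_iff_trace_mul_right.mpr fun F => RCLike.ext (h F) ?_
  simpa only [Matrix.mul_smul, trace_smul, smul_eq_mul, RCLike.I_mul_re, neg_inj]
    using h ((RCLike.I : 𝕜) • F)

theorem trace_conjTranspose_mul_mul_transpose {k : Type*} [Fintype k] (A : Matrix m n 𝕜)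
    (B : Matrix m k 𝕜) (F : Matrix n k 𝕜) : (Aᴴ * (B * Fᵀ)).trace = (Bᵀ * Aᴴᵀ * F).trace := by
  rw [← trace_transpose, transpose_mul, transpose_mul, transpose_transpose]
  exact (trace_mul_cycle Bᵀ Aᴴᵀ F).symm

theorem re_trace_conjTranspose_mul (A B : Matrix m n ℂ) :
    (Aᴴ * B).trace.re = ∑ i, ∑ j, inner ℝ (A i j) (B i j) := by
  simp only [trace, diag, mul_apply, conjTranspose_apply, Complex.re_sum, Complex.inner]
  rw [Finset.sum_comm]
  simp only [RCLike.star_def, mul_comm]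

end Algebra

section Calculus

attribute [local instance] Matrix.frobeniusNormedAddCommGroup Matrix.frobeniusNormedSpace
  Matrix.frobeniusNormedRing Matrix.frobeniusNormedAlgebra

section General

variable {𝕜 : Type*} [RCLike 𝕜] {l m n : Type*} [Fintype l] [Fintype m] [Fintype n] {t : ℝ}

theorem HasDerivAt.matrix_mul_left {X : ℝ → Matrix m n 𝕜} {X' : Matrix m n 𝕜}
    (A : Matrix l m 𝕜) (hX : HasDerivAt X X' t) : HasDerivAt (fun s => A * X s) (A * X') t :=
  (mulLeftLinearMap n ℝ A).toContinuousLinearMap.hasFDerivAt.comp_hasDerivAt t hX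

theorem HasDerivAt.matrix_transpose {X : ℝ → Matrix m n 𝕜} {X' : Matrix m n 𝕜}
    (hX : HasDerivAt X X' t) : HasDerivAt (fun s => (X s)ᵀ) X'ᵀ t :=
  (transposeLinearEquiv m n ℝ 𝕜).toLinearMap.toContinuousLinearMap.hasFDerivAt.comp_hasDerivAt t hX

theorem HasDerivAt.matrix_inv [DecidableEq m] {X : ℝ → Matrix m m 𝕜} {X' : Matrix m m 𝕜}
    (hX : HasDerivAt X X' t) (hunit : IsUnit (X t)) :
    HasDerivAt (fun s => (X s)⁻¹) (-((X t)⁻¹ * X' * (X t)⁻¹)) t := by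
  obtain ⟨u, hu⟩ := hunit
  simp_rw [nonsing_inv_eq_ringInverse]
  have := (hu ▸ hasFDerivAt_ringInverse (𝕜 := ℝ) u).comp_hasDerivAt t hX
  rw [← hu, Ring.inverse_unit]
  exact this

end General

theorem HasDerivAt.frobNorm_sq {m n : ℕ} {f : ℝ → Matrix (Fin m) (Fin n) ℂ}
    {f' : Matrix (Fin m) (Fin n) ℂ} {t : ℝ} (hf : HasDerivAt f f' t) :
    HasDerivAt (fun s => frobNorm (f s) ^ 2) (2 * ((f t)ᴴ * f').trace.re) t := by
  have hentry (i j) : HasDerivAt (fun s => f s i j) (f' i j) t :=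
    (entryLinearMap ℝ ℂ i j).toContinuousLinearMap.hasFDerivAt.comp_hasDerivAt t hf
  simp_rw [frobNorm_sq_eq_sum, re_trace_conjTranspose_mul, Finset.mul_sum]
  exact HasDerivAt.fun_sum fun i _ => HasDerivAt.fun_sum fun j _ => (hentry i j).norm_sq

variable {ns r : ℕ} (Z Zs : Matrix (Fin ns) (Fin r) ℂ)

def alignCost (P : Matrix (Fin r) (Fin r) ℂ) : ℝ :=
  frobNorm (Z - Zs * P) ^ 2 + frobNorm (Z - Zs * (P⁻¹)ᵀ) ^ 2

variable {Z Zs} {P : Matrix (Fin r) (Fin r) ℂ}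

theorem hasDerivAt_alignCost_add_smul (hP : IsUnit P) (E : Matrix (Fin r) (Fin r) ℂ) :
    HasDerivAt (fun s : ℝ => alignCost Z Zs (P + s • E))
      (2 * ((Z - Zs * (P⁻¹)ᵀ)ᴴ * (Zs * (P⁻¹ * E * P⁻¹)ᵀ)).trace.re
        - 2 * ((Z - Zs * P)ᴴ * (Zs * E)).trace.re) 0 := by
  have hline : HasDerivAt (fun s : ℝ => P + s • E) E 0 :=
    (((hasDerivAt_id' (0 : ℝ)).smul_const E).const_add P).congr_deriv (one_smul ℝ E)
  have hinv := hline.matrix_inv (by simpa using hP)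
  refine ((((hline.matrix_mul_left Zs).const_sub Z).frobNorm_sq).fun_add
    ((((hinv.matrix_transpose).matrix_mul_left Zs).const_sub Z).frobNorm_sq)).congr_deriv ?_
  simp only [zero_smul, add_zero, Matrix.mul_neg, transpose_neg, neg_neg, trace_neg,
    Complex.neg_re]
  ring

theorem re_trace_eq_of_isMinOn_alignCost (hP : IsUnit P)
    (hmin : IsMinOn (alignCost Z Zs) {X | IsUnit X} P) (E : Matrix (Fin r) (Fin r) ℂ) :
    ((Z - Zs * P)ᴴ * (Zs * E)).trace.re
      = ((Z - Zs * (P⁻¹)ᵀ)ᴴ * (Zs * (P⁻¹ * E * P⁻¹)ᵀ)).trace.re := by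
  have hloc : IsLocalMin (fun s : ℝ => alignCost Z Zs (P + s • E)) 0 := by
    refine IsLocalMin.comp_continuous (f := alignCost Z Zs) (g := fun s : ℝ => P + s • E) ?_
      (by fun_prop : ContinuousAt (fun s : ℝ => P + s • E) 0)
    rw [zero_smul, add_zero]
    exact hmin.isLocalMin (Units.isOpen.mem_nhds hP)
  linarith [hloc.hasDerivAt_eq_zero (hasDerivAt_alignCost_add_smul hP E)]

end Calculus

/-- First-order optimality condition for the alignment distance: if an invertible
`P` minimizes `‖Z − Z⋆P′‖_F² + ‖Z − Z⋆(P′)^{−T}‖_F²` over invertible `P′`, then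
`(Z⋆P)ᴴ(Z − Z⋆P) = (Z − Z⋆P^{−T})ᵀ · conj(Z⋆P^{−T})`. -/
theorem alignment_first_order_optimality (ns r : ℕ)
    (Z Zs : Matrix (Fin ns) (Fin r) ℂ)
    (P : Matrix (Fin r) (Fin r) ℂ) (hP : IsUnit P)
    (hmin : ∀ P' : Matrix (Fin r) (Fin r) ℂ, IsUnit P' →
      frobNorm (Z - Zs * P) ^ 2 + frobNorm (Z - Zs * (P⁻¹)ᵀ) ^ 2
        ≤ frobNorm (Z - Zs * P') ^ 2 + frobNorm (Z - Zs * (P'⁻¹)ᵀ) ^ 2) :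
    (Zs * P)ᴴ * (Z - Zs * P)
      = (Z - Zs * (P⁻¹)ᵀ)ᵀ * conjM (Zs * (P⁻¹)ᵀ) := by
  have hstat := re_trace_eq_of_isMinOn_alignCost hP (isMinOn_iff.mpr hmin)
  have hgrad : (Z - Zs * P)ᴴ * (Zs * P) = (Zs * (P⁻¹)ᵀ)ᵀ * (Z - Zs * (P⁻¹)ᵀ)ᴴᵀ := by
    refine ext_of_re_trace_mul fun F => ?_
    have h := hstat (P * F)
    rw [nonsing_inv_mul_cancel_left _ _ ((isUnit_iff_isUnit_det P).mp hP), transpose_mul,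
      ← Matrix.mul_assoc Zs (P⁻¹)ᵀ, trace_conjTranspose_mul_mul_transpose] at h
    simp only [Matrix.mul_assoc] at h ⊢
    exact h
  calc (Zs * P)ᴴ * (Z - Zs * P) = ((Z - Zs * P)ᴴ * (Zs * P))ᴴ := by
        rw [conjTranspose_mul (Z - Zs * P)ᴴ, conjTranspose_conjTranspose]
    _ = (Z - Zs * (P⁻¹)ᵀ)ᵀ * conjM (Zs * (P⁻¹)ᵀ) := by
        rw [hgrad, conjTranspose_mul, conjTranspose_transpose_eq_transpose_conjTranspose,
          conjTranspose_conjTranspose, transpose_conjTranspose_eq_conjM]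
end
end

section
/- Alignment lower bound (key inequality in the proof of Lemma 5). Let G, F⋆ ∈ ℂ^{N×r} and suppose F⋆ᴴG is Hermitian positive semidefinite. Set Δ = G − F⋆. Then ‖G·Gᴴ − F⋆·F⋆ᴴ‖_F² ≥ 2(√2 − 1)·Re tr((F⋆ᴴF⋆)·(ΔᴴΔ)). In particular, ‖G·Gᴴ − F⋆·F⋆ᴴ‖_F² ≥ 2(√2 − 1)·σ_min(F⋆)²·‖Δ‖_F². -/
open Matrix
open scoped BigOperators ComplexOrder

noncomputable section

/-- Euclidean (ℓ₂) norm of a complex vector. -/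
def vecNorm {n : ℕ} (v : Fin n → ℂ) : ℝ :=
  Real.sqrt (∑ i, ‖v i‖ ^ 2)

/-- Smallest singular value of a complex matrix: infimum of `‖Av‖₂` over unit vectors `v`. -/
def sigmaMin {m n : ℕ} (A : Matrix (Fin m) (Fin n) ℂ) : ℝ :=
  sInf {t : ℝ | ∃ v : Fin n → ℂ, vecNorm v = 1 ∧ t = vecNorm (A.mulVec v)}

/-!
Write `Δ = G − F⋆`, `H = F⋆ᴴΔ`, `P = F⋆ᴴF⋆` and `S = ΔᴴΔ`. Since `F⋆ᴴG = P + H` is Hermitian, so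
is `H`, and moving traces cyclically onto `r × r` Gram matrices turns the squared Frobenius norm of
`GGᴴ − F⋆F⋆ᴴ = F⋆Δᴴ + ΔF⋆ᴴ + ΔΔᴴ` into `2‖H‖² + 2 tr(PS) + 4 tr(HS) + ‖S‖²`. Positivity of `P + H`
gives `tr(PS) + tr(HS) ≥ 0`, Cauchy–Schwarz gives `tr(HS) ≥ −‖H‖‖S‖`, and
`2‖H‖² + ‖S‖² ≥ 2√2‖H‖‖S‖`; adding the first two with weights `4 − 2√2` and `2√2` leaves
`2(√2 − 1) tr(PS)`. Finally `tr(PS) = ‖F⋆Δᴴ‖²`, which is at least `σ_min(F⋆)²‖Δ‖²` column by column.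
-/

section TraceAlgebra

variable {m n 𝕜 : Type*} [Fintype m] [Fintype n]

lemma trace_mul_conjTranspose_mul_mul_conjTranspose {R : Type*} [CommSemiring R] [StarRing R]
    (X Y Z W : Matrix m n R) :
    trace (X * Yᴴ * (Z * Wᴴ)) = trace (Wᴴ * X * (Yᴴ * Z)) := by
  rw [← Matrix.mul_assoc, trace_mul_comm]
  simp only [Matrix.mul_assoc]

open scoped MatrixOrder Matrix.Norms.L2Operator in
lemma Matrix.PosSemidef.trace_mul_nonneg [RCLike 𝕜] {A B : Matrix n n 𝕜}
    (hA : A.PosSemidef) (hB : B.PosSemidef) : 0 ≤ trace (A * B) := by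
  classical
  obtain ⟨X, rfl⟩ := CStarAlgebra.nonneg_iff_eq_star_mul_self.mp hA.nonneg
  rw [star_eq_conjTranspose, Matrix.mul_assoc, trace_mul_comm]
  exact (hB.mul_mul_conjTranspose_same X).trace_nonneg

end TraceAlgebra

section FrobeniusNorm

variable {m n : ℕ}

lemma frobNorm_sq (A : Matrix (Fin m) (Fin n) ℂ) : frobNorm A ^ 2 = ∑ i, ∑ j, ‖A i j‖ ^ 2 :=
  Real.sq_sqrt (by positivity)

lemma frobNorm_conjTranspose (A : Matrix (Fin m) (Fin n) ℂ) : frobNorm Aᴴ = frobNorm A := by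
  rw [frobNorm, Finset.sum_comm]
  simp [frobNorm]

lemma frobNorm_sq_eq_re_trace_conjTranspose_mul_self (A : Matrix (Fin m) (Fin n) ℂ) :
    frobNorm A ^ 2 = (trace (Aᴴ * A)).re := by
  simp only [frobNorm_sq, trace, diag, mul_apply, conjTranspose_apply, Complex.re_sum,
    Complex.star_def, ← Complex.normSq_eq_norm_sq]
  rw [Finset.sum_comm]
  simp [Complex.normSq_apply]

lemma frobNorm_sq_eq_re_trace_mul_self {A : Matrix (Fin n) (Fin n) ℂ} (hA : A.IsHermitian) :
    frobNorm A ^ 2 = (trace (A * A)).re := by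
  rw [frobNorm_sq_eq_re_trace_conjTranspose_mul_self, hA.eq]

lemma norm_trace_mul_le (A : Matrix (Fin m) (Fin n) ℂ) (B : Matrix (Fin n) (Fin m) ℂ) :
    ‖trace (A * B)‖ ≤ frobNorm A * frobNorm B := by
  calc ‖trace (A * B)‖ = ‖∑ p : Fin m × Fin n, A p.1 p.2 * B p.2 p.1‖ := by
        simp [trace, mul_apply, Fintype.sum_prod_type]
    _ ≤ ∑ p : Fin m × Fin n, ‖A p.1 p.2‖ * ‖B p.2 p.1‖ := by
        simpa only [norm_mul] using
          norm_sum_le Finset.univ fun p : Fin m × Fin n => A p.1 p.2 * B p.2 p.1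
    _ ≤ Real.sqrt (∑ p : Fin m × Fin n, ‖A p.1 p.2‖ ^ 2)
          * Real.sqrt (∑ p : Fin m × Fin n, ‖B p.2 p.1‖ ^ 2) :=
        Real.sum_mul_le_sqrt_mul_sqrt _ _ _
    _ = frobNorm A * frobNorm B := by
        rw [frobNorm, frobNorm, Fintype.sum_prod_type, Fintype.sum_prod_type_right]

end FrobeniusNorm

section Expansion

variable {N r : ℕ}

lemma trace_sq_add_mul_conjTranspose_sub (F Δ : Matrix (Fin N) (Fin r) ℂ)
    (hH : Δᴴ * F = Fᴴ * Δ) :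
    trace (((F + Δ) * (F + Δ)ᴴ - F * Fᴴ) * ((F + Δ) * (F + Δ)ᴴ - F * Fᴴ))
      = 2 * trace (Fᴴ * Δ * (Fᴴ * Δ)) + 2 * trace (Fᴴ * F * (Δᴴ * Δ))
        + 4 * trace (Fᴴ * Δ * (Δᴴ * Δ)) + trace (Δᴴ * Δ * (Δᴴ * Δ)) := by
  have hM : (F + Δ) * (F + Δ)ᴴ - F * Fᴴ = F * Δᴴ + Δ * Fᴴ + Δ * Δᴴ := by
    rw [conjTranspose_add, Matrix.add_mul, Matrix.mul_add, Matrix.mul_add]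
    abel
  rw [hM]
  simp only [Matrix.add_mul, Matrix.mul_add, trace_add,
    trace_mul_conjTranspose_mul_mul_conjTranspose, hH]
  rw [trace_mul_comm (Δᴴ * Δ) (Fᴴ * F), trace_mul_comm (Δᴴ * Δ) (Fᴴ * Δ)]
  ring

lemma frobNorm_sq_add_mul_conjTranspose_sub (F Δ : Matrix (Fin N) (Fin r) ℂ)
    (hH : (Fᴴ * Δ).IsHermitian) :
    frobNorm ((F + Δ) * (F + Δ)ᴴ - F * Fᴴ) ^ 2
      = 2 * frobNorm (Fᴴ * Δ) ^ 2 + 2 * (trace (Fᴴ * F * (Δᴴ * Δ))).re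
        + 4 * (trace (Fᴴ * Δ * (Δᴴ * Δ))).re + frobNorm (Δᴴ * Δ) ^ 2 := by
  have hM : ((F + Δ) * (F + Δ)ᴴ - F * Fᴴ).IsHermitian :=
    (isHermitian_mul_conjTranspose_self _).sub (isHermitian_mul_conjTranspose_self _)
  have hΔF : Δᴴ * F = Fᴴ * Δ := by
    rw [← hH.eq, conjTranspose_mul, conjTranspose_conjTranspose]
  rw [frobNorm_sq_eq_re_trace_mul_self hM, frobNorm_sq_eq_re_trace_mul_self hH,
    frobNorm_sq_eq_re_trace_mul_self (isHermitian_conjTranspose_mul_self Δ),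
    trace_sq_add_mul_conjTranspose_sub F Δ hΔF]
  simp

end Expansion

lemma two_mul_sqrt_two_sub_one_mul_le {a b h p : ℝ} (hh : -(a * b) ≤ h) (hhp : 0 ≤ p + h) :
    2 * (Real.sqrt 2 - 1) * p ≤ 2 * a ^ 2 + 2 * p + 4 * h + b ^ 2 := by
  have h2 : Real.sqrt 2 ^ 2 = 2 := Real.sq_sqrt zero_le_two
  have hs : Real.sqrt 2 ≤ 2 := by nlinarith [Real.sqrt_nonneg 2]
  nlinarith [sq_nonneg (Real.sqrt 2 * a - b), Real.sqrt_nonneg 2,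
    mul_nonneg (Real.sqrt_nonneg 2) (neg_le_iff_add_nonneg.mp hh),
    mul_nonneg (sub_nonneg.mpr hs) hhp]

section SmallestSingularValue

variable {m n : ℕ}

lemma vecNorm_sq (v : Fin n → ℂ) : vecNorm v ^ 2 = ∑ i, ‖v i‖ ^ 2 :=
  Real.sq_sqrt (by positivity)

lemma vecNorm_nonneg (v : Fin n → ℂ) : 0 ≤ vecNorm v :=
  Real.sqrt_nonneg _

lemma vecNorm_smul (a : ℂ) (v : Fin n → ℂ) : vecNorm (a • v) = ‖a‖ * vecNorm v := by
  simp only [vecNorm, Pi.smul_apply, smul_eq_mul, norm_mul, mul_pow, ← Finset.mul_sum]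
  rw [Real.sqrt_mul (by positivity), Real.sqrt_sq (norm_nonneg a)]

lemma sigmaMin_nonneg (A : Matrix (Fin m) (Fin n) ℂ) : 0 ≤ sigmaMin A :=
  Real.sInf_nonneg fun _ ⟨_, _, ht⟩ => ht ▸ vecNorm_nonneg _

lemma sigmaMin_mul_vecNorm_le (A : Matrix (Fin m) (Fin n) ℂ) (v : Fin n → ℂ) :
    sigmaMin A * vecNorm v ≤ vecNorm (A *ᵥ v) := by
  rcases (vecNorm_nonneg v).eq_or_lt with hv | hv
  · rw [← hv, mul_zero]
    exact vecNorm_nonneg _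
  have hnorm : ‖((vecNorm v : ℂ))⁻¹‖ = (vecNorm v)⁻¹ := by
    rw [norm_inv, Complex.norm_real, Real.norm_of_nonneg hv.le]
  have hle : sigmaMin A ≤ vecNorm (A *ᵥ (((vecNorm v : ℂ))⁻¹ • v)) := by
    refine csInf_le ⟨0, fun _ ⟨_, _, ht⟩ => ht ▸ vecNorm_nonneg _⟩ ⟨_, ?_, rfl⟩
    rw [vecNorm_smul, hnorm, inv_mul_cancel₀ hv.ne']
  rw [mulVec_smul, vecNorm_smul, hnorm] at hle
  rwa [le_inv_mul_iff₀ hv, mul_comm] at hle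

lemma frobNorm_sq_eq_sum_vecNorm_sq {k : ℕ} (X : Matrix (Fin n) (Fin k) ℂ) :
    frobNorm X ^ 2 = ∑ j, vecNorm (Xᵀ j) ^ 2 := by
  simp only [frobNorm_sq, vecNorm_sq, transpose_apply]
  exact Finset.sum_comm

lemma sigmaMin_sq_mul_frobNorm_sq_le {k : ℕ} (A : Matrix (Fin m) (Fin n) ℂ)
    (X : Matrix (Fin n) (Fin k) ℂ) :
    sigmaMin A ^ 2 * frobNorm X ^ 2 ≤ frobNorm (A * X) ^ 2 := by
  rw [frobNorm_sq_eq_sum_vecNorm_sq, frobNorm_sq_eq_sum_vecNorm_sq, Finset.mul_sum]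
  refine Finset.sum_le_sum fun j _ => ?_
  rw [← mul_pow]
  exact pow_le_pow_left₀ (mul_nonneg (sigmaMin_nonneg A) (vecNorm_nonneg _))
    (sigmaMin_mul_vecNorm_le A (Xᵀ j)) 2

end SmallestSingularValue

/-- Alignment lower bound (key inequality in the proof of Lemma 5): if `F⋆ᴴG` is
Hermitian positive semidefinite and `Δ = G − F⋆`, then
`‖GGᴴ − F⋆F⋆ᴴ‖_F² ≥ 2(√2−1)·Re tr((F⋆ᴴF⋆)(ΔᴴΔ))`, and in particular
`‖GGᴴ − F⋆F⋆ᴴ‖_F² ≥ 2(√2−1)·σ_min(F⋆)²·‖Δ‖_F²`. -/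
theorem alignment_lower_bound (N r : ℕ)
    (G Fs : Matrix (Fin N) (Fin r) ℂ)
    (hpsd : (Fsᴴ * G).PosSemidef) :
    (frobNorm (G * Gᴴ - Fs * Fsᴴ) ^ 2
        ≥ 2 * (Real.sqrt 2 - 1)
          * (Matrix.trace ((Fsᴴ * Fs) * ((G - Fs)ᴴ * (G - Fs)))).re)
    ∧ frobNorm (G * Gᴴ - Fs * Fsᴴ) ^ 2
        ≥ 2 * (Real.sqrt 2 - 1) * sigmaMin Fs ^ 2 * frobNorm (G - Fs) ^ 2 := by
  obtain ⟨Δ, rfl⟩ : ∃ Δ, G = Fs + Δ := ⟨G - Fs, (add_sub_cancel _ _).symm⟩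
  rw [add_sub_cancel_left]
  rw [Matrix.mul_add] at hpsd
  have hH : (Fsᴴ * Δ).IsHermitian := by
    simpa only [add_sub_cancel_left] using
      hpsd.isHermitian.sub (isHermitian_conjTranspose_mul_self Fs)
  have hCS : -(frobNorm (Fsᴴ * Δ) * frobNorm (Δᴴ * Δ)) ≤ (trace (Fsᴴ * Δ * (Δᴴ * Δ))).re :=
    neg_le_of_abs_le ((Complex.abs_re_le_norm _).trans (norm_trace_mul_le _ _))
  have hPSD : 0 ≤ (trace (Fsᴴ * Fs * (Δᴴ * Δ))).re + (trace (Fsᴴ * Δ * (Δᴴ * Δ))).re := by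
    simpa only [Matrix.add_mul, trace_add, Complex.add_re, Complex.zero_re] using
      (hpsd.trace_mul_nonneg (posSemidef_conjTranspose_mul_self Δ)).1
  have hbound := two_mul_sqrt_two_sub_one_mul_le hCS hPSD
  rw [← frobNorm_sq_add_mul_conjTranspose_sub Fs Δ hH] at hbound
  refine ⟨hbound, le_trans ?_ hbound⟩
  have hP : frobNorm (Fs * Δᴴ) ^ 2 = (trace (Fsᴴ * Fs * (Δᴴ * Δ))).re := by
    rw [frobNorm_sq_eq_re_trace_conjTranspose_mul_self, conjTranspose_mul,
      conjTranspose_conjTranspose, Matrix.mul_assoc, trace_mul_comm]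
    simp only [Matrix.mul_assoc]
  rw [mul_assoc, ← hP, ← frobNorm_conjTranspose Δ]
  exact mul_le_mul_of_nonneg_left (sigmaMin_sq_mul_frobNorm_sq_le Fs Δᴴ)
    (mul_nonneg zero_le_two (sub_nonneg.mpr Real.one_lt_sqrt_two.le))
end
end
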